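/- Let N = 2n with n ≥ 2, let 1 = μ₁ < … < μ_n, and let Σ = {3,…,n}. For (u,v) with 0 ≤ v ≤ u ≤ μ_n v, and σ = (s₃,…,s_n) ∈ ℝ₊^Σ satisfying u - μ₁ v ≥ ℓ₁(σ) and u - μ₂ v ≤ ℓ₂(σ) where ℓ₁(σ) = Σ_{i=3}^n (1 - μ₁/μᵢ) sᵢ and ℓ₂(σ) = Σ_{i=3}^n (1 - μ₂/μᵢ) sᵢ, define s₁ and s₂ by μ₂(1 - 1/μ₂) s₁ = -u + μ₂ v + ℓ₂(σ) and (1 - 1/μ₂) s₂ = u - μ₁ v - ℓ₁(σ). Then s₁ ≥ 0, s₂ ≥ 0, Σ_{i=1}^n sᵢ = u and Σ_{i=1}^n sᵢ/μᵢ = v. -/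
import Mathlib


theorem stmt_12 (n : ℕ) (hn : 2 ≤ n) (μ : Fin n → ℝ)
    (hμ1 : μ ⟨0, by omega⟩ = 1) (hmono : StrictMono μ)
    (u v : ℝ) (hv : 0 ≤ v) (hvu : v ≤ u) (hu : u ≤ μ ⟨n - 1, by omega⟩ * v)
    (s : Fin n → ℝ)
    (hσnn : ∀ i : Fin n, 2 ≤ (i : ℕ) → 0 ≤ s i)
    (hc1 : ∑ i ∈ Finset.univ.filter (fun i : Fin n => 2 ≤ (i : ℕ)),
        (1 - μ ⟨0, by omega⟩ / μ i) * s i ≤ u - μ ⟨0, by omega⟩ * v)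
    (hc2 : u - μ ⟨1, by omega⟩ * v ≤
      ∑ i ∈ Finset.univ.filter (fun i : Fin n => 2 ≤ (i : ℕ)),
        (1 - μ ⟨1, by omega⟩ / μ i) * s i)
    (hs1 : μ ⟨1, by omega⟩ * (1 - 1 / μ ⟨1, by omega⟩) * s ⟨0, by omega⟩ =
      -u + μ ⟨1, by omega⟩ * v +
        ∑ i ∈ Finset.univ.filter (fun i : Fin n => 2 ≤ (i : ℕ)),
          (1 - μ ⟨1, by omega⟩ / μ i) * s i)
    (hs2 : (1 - 1 / μ ⟨1, by omega⟩) * s ⟨1, by omega⟩ =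
      u - μ ⟨0, by omega⟩ * v -
        ∑ i ∈ Finset.univ.filter (fun i : Fin n => 2 ≤ (i : ℕ)),
          (1 - μ ⟨0, by omega⟩ / μ i) * s i) :
    0 ≤ s ⟨0, by omega⟩ ∧ 0 ≤ s ⟨1, by omega⟩ ∧
      (∑ i, s i) = u ∧ (∑ i, s i / μ i) = v := by
  have h0 : (⟨0, by omega⟩ : Fin n) < ⟨1, by omega⟩ := by
    simp [Fin.lt_def]
  set m := μ ⟨1, by omega⟩ with hm
  have hm1 : 1 < m := by rw [← hμ1]; exact hmono h0
  have hm0 : (0:ℝ) < m := by linarith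
  have hmne : m ≠ 0 := ne_of_gt hm0
  have hprod : m * (1 - 1 / m) = m - 1 := by field_simp
  have hc : (0:ℝ) < 1 - 1 / m := by
    have : 1 / m < 1 := by rw [div_lt_one hm0]; exact hm1
    linarith
  simp only [hμ1] at hc1 hs2
  -- abbreviations
  set T := Finset.univ.filter (fun i : Fin n => 2 ≤ (i : ℕ)) with hT
  set A := ∑ i ∈ T, s i with hA
  set B := ∑ i ∈ T, s i / μ i with hB
  have hL1 : ∑ i ∈ T, (1 - 1 / μ i) * s i = A - B := by
    rw [hA, hB, ← Finset.sum_sub_distrib]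
    exact Finset.sum_congr rfl fun i _ => by ring
  have hL2 : ∑ i ∈ T, (1 - m / μ i) * s i = A - m * B := by
    rw [hA, hB, Finset.mul_sum, ← Finset.sum_sub_distrib]
    exact Finset.sum_congr rfl fun i _ => by ring
  rw [hL1] at hc1 hs2
  rw [hL2] at hc2 hs1
  rw [hprod] at hs1
  -- positivity
  have hs0nn : 0 ≤ s ⟨0, by omega⟩ := by
    have h1 : 0 ≤ (m - 1) * s ⟨0, by omega⟩ := by linarith
    nlinarith
  have hs1nn : 0 ≤ s ⟨1, by omega⟩ := by
    have h1 : 0 ≤ (1 - 1 / m) * s ⟨1, by omega⟩ := by linarith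
    nlinarith
  refine ⟨hs0nn, hs1nn, ?_, ?_⟩
  · have hsplit := Finset.sum_filter_add_sum_filter_not Finset.univ
      (fun i : Fin n => 2 ≤ (i : ℕ)) s
    have hcompl : Finset.univ.filter (fun i : Fin n => ¬ 2 ≤ (i : ℕ)) =
        {⟨0, by omega⟩, ⟨1, by omega⟩} := by
      ext i
      simp [Fin.ext_iff]
      omega
    rw [hcompl, ← hT] at hsplit
    rw [Finset.sum_pair (by simp [Fin.ext_iff] : (⟨0, by omega⟩ : Fin n) ≠ ⟨1, by omega⟩)] at hsplit
    have key : (m - 1) * (A + (s ⟨0, by omega⟩ + s ⟨1, by omega⟩) - u) = 0 := by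
      have e2 : (m - 1) * s ⟨1, by omega⟩ = m * (u - v - (A - B)) := by
        have := hs2
        field_simp at this ⊢
        linarith
      linarith [hs1, e2]
    have := mul_eq_zero.mp key
    rcases this with h | h
    · exfalso; linarith
    · linarith [hsplit, sub_eq_zero.mp h]
  · have hsplit := Finset.sum_filter_add_sum_filter_not Finset.univ
      (fun i : Fin n => 2 ≤ (i : ℕ)) (fun i => s i / μ i)
    have hcompl : Finset.univ.filter (fun i : Fin n => ¬ 2 ≤ (i : ℕ)) =
        {⟨0, by omega⟩, ⟨1, by omega⟩} := by
      ext i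
      simp [Fin.ext_iff]
      omega
    rw [hcompl, ← hT] at hsplit
    rw [Finset.sum_pair (by simp [Fin.ext_iff] : (⟨0, by omega⟩ : Fin n) ≠ ⟨1, by omega⟩)] at hsplit
    simp only [hμ1] at hsplit
    have key : (m - 1) * (B + (s ⟨0, by omega⟩ / 1 + s ⟨1, by omega⟩ / m) - v) = 0 := by
      have e2 : (m - 1) * (s ⟨1, by omega⟩ / m) = u - v - (A - B) := by
        have h2 := hs2
        field_simp at h2 ⊢
        linarith
      linarith [hs1, e2]
    have := mul_eq_zero.mp key
    rcases this with h | h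
    · exfalso; linarith
    · linarith [hsplit, sub_eq_zero.mp h]
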